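/- The number of binary r×m matrices of rank m (with m ≤ r) is at most 2^{mr}, and if 2^{mr}·(1 − m·2^{−m})^N < 1 then there exists a set of N vectors in F_2^r such that every r×m binary matrix of rank m admits a vector a in the set with wt(aM) = 1. -/

import Mathlib

/-!
If `M` has full column rank `m`, then `v ↦ v ᵥ* M` maps `𝔽₂^r` onto `𝔽₂^m` with fibres of equal
size, and `𝔽₂^m` contains at least `m` vectors of weight one; so a uniformly random `v` gives
`wt (v ᵥ* M) = 1` with probability at least `m / 2^m`. A union bound over the at most `2^(mr)`
such matrices shows that `N` random vectors all fail for some `M` with probability at most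
`2^(mr) (1 - m / 2^m)^N < 1`.
-/

open Finset Matrix

theorem AddMonoidHom.card_preimage_mul_card {G H F : Type*} [AddGroup G] [Fintype G] [AddMonoid H]
    [Fintype H] [DecidableEq H] [FunLike F G H] [AddMonoidHomClass F G H] (f : F)
    (hf : Function.Surjective f) (S : Finset H) :
    #{g | f g ∈ S} * Fintype.card H = #S * Fintype.card G := by
  have hpreimage (T : Finset H) : #{g | f g ∈ T} = #T * #{g | f g = 0} := by
    rw [← sum_card_fiberwise_eq_card_filter,
      sum_const_nat fun y _ => card_fiber_eq_of_mem_range f (hf y) (hf 0)]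
  have hG := hpreimage univ
  simp only [mem_univ, filter_true, card_univ] at hG
  rw [hpreimage, hG, mul_right_comm, mul_assoc]

theorem hammingNorm_single {ι β : Type*} [Fintype ι] [DecidableEq ι] [Zero β] [DecidableEq β]
    (i : ι) {b : β} (hb : b ≠ 0) : hammingNorm (Pi.single i b : ι → β) = 1 := by
  rw [hammingNorm, card_eq_one]
  exact ⟨i, by ext j; by_cases h : j = i <;> simp [Pi.single_apply, h, hb]⟩

theorem card_le_card_hammingNorm_eq_one {ι β : Type*} [Fintype ι] [DecidableEq ι] [Zero β]
    [DecidableEq β] [Fintype β] [Nontrivial β] :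
    Fintype.card ι ≤ #{x : ι → β | hammingNorm x = 1} := by
  obtain ⟨b, hb⟩ := exists_ne (0 : β)
  refine card_le_card_of_injOn (fun i => Pi.single i b) (fun i _ => ?_) fun i _ j _ hij => ?_
  · simpa using hammingNorm_single i hb
  · by_contra hne
    simpa [Pi.single_apply, hne, hb] using congrFun hij i

theorem Matrix.vecMulLinear_surjective_of_rank_eq {K m n : Type*} [Field K] [Fintype m]
    [Fintype n] (M : Matrix m n K) (hM : M.rank = Fintype.card n) :
    Function.Surjective M.vecMulLinear := by
  rw [← LinearMap.range_eq_top, ← mulVecLin_transpose]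
  apply Submodule.eq_top_of_finrank_eq
  rw [← rank, rank_transpose, hM, Module.finrank_fintype_fun_eq_card]

theorem Matrix.card_hammingNorm_vecMul_ne_one_le {K m n : Type*} [Field K] [Fintype K]
    [DecidableEq K] [Fintype m] [DecidableEq m] [Fintype n] [DecidableEq n] (M : Matrix m n K)
    (hM : M.rank = Fintype.card n) :
    (#{v | hammingNorm (v ᵥ* M) ≠ 1} : ℝ) ≤
      (1 - Fintype.card n / Fintype.card K ^ Fintype.card n) * Fintype.card K ^ Fintype.card m := by
  have hgood := AddMonoidHom.card_preimage_mul_card M.vecMulLinear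
    (M.vecMulLinear_surjective_of_rank_eq hM) {w | hammingNorm w = 1}
  have hweight : Fintype.card n ≤ #{w : n → K | hammingNorm w = 1} :=
    card_le_card_hammingNorm_eq_one
  have hsplit := card_filter_add_card_filter_not (s := univ)
    fun v : m → K => hammingNorm (v ᵥ* M) = 1
  simp only [mem_filter, mem_univ, true_and, vecMulLinear_apply, Fintype.card_fun, card_univ]
    at hgood hsplit
  have hQn : (0 : ℝ) < Fintype.card K ^ Fintype.card n := by positivity
  have hmany : (Fintype.card n : ℝ) * Fintype.card K ^ Fintype.card m ≤
      #{v | hammingNorm (v ᵥ* M) = 1} * Fintype.card K ^ Fintype.card n := by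
    exact_mod_cast hgood ▸ Nat.mul_le_mul_right _ hweight
  have hbad : (#{v | hammingNorm (v ᵥ* M) ≠ 1} : ℝ) =
      Fintype.card K ^ Fintype.card m - #{v | hammingNorm (v ᵥ* M) = 1} := by
    rw [eq_sub_iff_add_eq, add_comm]
    exact_mod_cast hsplit
  rw [hbad, sub_mul, one_mul, div_mul_eq_mul_div, sub_le_sub_iff_left, div_le_iff₀ hQn]
  exact hmany

theorem exists_forall_exists_apply_notMem_of_card_mul_pow_lt {α β : Type*} [Fintype β]
    [Nonempty β] [DecidableEq β] {N : ℕ} (A : Finset α) (bad : α → Finset β) {p : ℝ}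
    (hbad : ∀ x ∈ A, (#(bad x) : ℝ) ≤ p * Fintype.card β) (hA : #A * p ^ N < 1) :
    ∃ a : Fin N → β, ∀ x ∈ A, ∃ i, a i ∉ bad x := by
  by_contra! hall
  have hcover : (univ : Finset (Fin N → β)) ⊆ A.biUnion fun x => Fintype.piFinset fun _ => bad x :=
    fun a _ => by
      obtain ⟨x, hx, hax⟩ := hall a
      exact mem_biUnion.2 ⟨x, hx, Fintype.mem_piFinset.2 hax⟩
  have hcount : (Fintype.card β : ℝ) ^ N ≤ #A * p ^ N * Fintype.card β ^ N := calc
    (Fintype.card β : ℝ) ^ N = #(univ : Finset (Fin N → β)) := by simp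
    _ ≤ ∑ x ∈ A, (#(bad x) : ℝ) ^ N := by
      exact_mod_cast (card_le_card hcover).trans <| card_biUnion_le.trans_eq <| by simp
    _ ≤ ∑ x ∈ A, (p * Fintype.card β) ^ N :=
      sum_le_sum fun x hx => pow_le_pow_left₀ (by positivity) (hbad x hx) N
    _ = #A * p ^ N * Fintype.card β ^ N := by simp [mul_pow, mul_assoc]
  have hpos : (0 : ℝ) < Fintype.card β ^ N := by positivity
  nlinarith

theorem stmt12_general (r m N : ℕ) :
    (Finset.univ.filter
        (fun M : Matrix (Fin r) (Fin m) (ZMod 2) => M.rank = m)).card ≤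
      2 ^ (m * r) ∧
    ((2 : ℝ) ^ (m * r) * (1 - (m : ℝ) / 2 ^ m) ^ N < 1 →
      ∃ a : Fin N → Fin r → ZMod 2,
        ∀ M : Matrix (Fin r) (Fin m) (ZMod 2), M.rank = m →
          ∃ i, hammingNorm (Matrix.vecMul (a i) M) = 1) := by
  have hcard : #{M : Matrix (Fin r) (Fin m) (ZMod 2) | M.rank = m} ≤ 2 ^ (m * r) :=
    (card_filter_le _ _).trans <| by rw [card_univ, ← Fintype.card_congr Matrix.of]; simp [pow_mul]
  refine ⟨hcard, fun h => ?_⟩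
  have hp : 0 ≤ 1 - (m : ℝ) / 2 ^ m := by
    rw [sub_nonneg, div_le_one (by positivity)]
    exact_mod_cast m.lt_two_pow_self.le
  obtain ⟨a, ha⟩ := exists_forall_exists_apply_notMem_of_card_mul_pow_lt
    {M : Matrix (Fin r) (Fin m) (ZMod 2) | M.rank = m}
    (fun M => {v | hammingNorm (v ᵥ* M) ≠ 1}) (p := 1 - (m : ℝ) / 2 ^ m)
    (fun M hM => by simpa using M.card_hammingNorm_vecMul_ne_one_le (by simpa using hM))
    (lt_of_le_of_lt (by gcongr; exact_mod_cast hcard) h)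
  exact ⟨a, fun M hM => by simpa using ha M (by simpa using hM)⟩

theorem stmt12 (r m N : ℕ) (hmr : m ≤ r) :
    (Finset.univ.filter
        (fun M : Matrix (Fin r) (Fin m) (ZMod 2) => M.rank = m)).card ≤
      2 ^ (m * r) ∧
    ((2 : ℝ) ^ (m * r) * (1 - (m : ℝ) / 2 ^ m) ^ N < 1 →
      ∃ a : Fin N → Fin r → ZMod 2,
        ∀ M : Matrix (Fin r) (Fin m) (ZMod 2), M.rank = m →
          ∃ i, hammingNorm (Matrix.vecMul (a i) M) = 1) :=
  stmt12_general r m N
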